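/- Let p be prime. For all ε > 0 and all finite bipartite graphs F = (U ∪ V, E) the following holds. Let A ⊆ 𝔽_p^n, let L be a linear factor of complexity ℓ on 𝔽_p^n, and let (d_u)_{u∈U}, (d_v)_{v∈V} be labels in 𝔽_p^ℓ. For each (u,v) ∈ U × V, let α_{uv} = |A ∩ L(d_u + d_v)| / |L(d_u + d_v)|. Suppose that for each (u,v) ∈ U × V, ‖1_A − α_{uv}‖_{U²((d_u,d_v))} ≤ ε. Then the number of tuples (x_u)_{u∈U}(y_v)_{v∈V} ∈ ∏_{u∈U} L(d_u) × ∏_{v∈V} L(d_v) such that x_u + y_v ∈ A if and only if uv ∈ E differs from (∏_{uv∈E} α_{uv}) · (∏_{uv∉E} (1 − α_{uv})) · ∏_{u∈U}|L(d_u)| · ∏_{v∈V}|L(d_v)| by at most ε·|U||V| · ∏_{u∈U}|L(d_u)| · ∏_{v∈V}|L(d_v)|. -/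

import Mathlib

open scoped BigOperators Matrix

namespace TW

noncomputable section

/-- Normalized average of a complex-valued function over a finite set. -/
def expC {α : Type*} (s : Finset α) (f : α → ℂ) : ℂ := (s.card : ℂ)⁻¹ * ∑ x ∈ s, f x

/-- Normalized average of a real-valued function over a finite set. -/
def expR {α : Type*} (s : Finset α) (f : α → ℝ) : ℝ := (s.card : ℝ)⁻¹ * ∑ x ∈ s, f x

/-- `k`-fold complex conjugation. -/
def cConj (k : ℕ) (z : ℂ) : ℂ := if k % 2 = 0 then z else (starRingEnd ℂ) z

/-- Select one of two elements according to a bit: `bsel false u v = u`, `bsel true u v = v`. -/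
def bsel {α : Type*} (b : Bool) (u v : α) : α := if b then v else u

/-- The number of ones in a boolean vector. -/
def wt {k : ℕ} (ω : Fin k → Bool) : ℕ := (Finset.univ.filter fun i => ω i = true).card

/-- The indicator function of a finite set, with values in `ℂ`. -/
def indC {α : Type*} [DecidableEq α] (A : Finset α) (x : α) : ℂ := if x ∈ A then 1 else 0

/-- The density `|A ∩ B| / |B|` of `A` on `B`. -/
def density {α : Type*} [DecidableEq α] (A B : Finset α) : ℝ :=
  ((A ∩ B).card : ℝ) / (B.card : ℝ)

/-- A growth function: an increasing positive function on `ℝ⁺`. -/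
def GrowthFunction (σ : ℝ → ℝ) : Prop :=
  (∀ x : ℝ, 0 < x → 0 < σ x) ∧ ∀ x y : ℝ, 0 < x → x ≤ y → σ x ≤ σ y

/-- A polynomial growth function: a growth function bounded above by a polynomial on `ℝ⁺`. -/
def PolyGrowthFunction (σ : ℝ → ℝ) : Prop :=
  GrowthFunction σ ∧ ∃ P : Polynomial ℝ, ∀ x : ℝ, 0 < x → σ x ≤ P.eval x

/-- `A ⊆ G` has the `m`-independence property (i.e. `VC`-dimension at least `m`). -/
def HasIP {G : Type*} [AddCommGroup G] (A : Set G) (m : ℕ) : Prop :=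
  ∃ (a : Fin m → G) (b : Finset (Fin m) → G),
    ∀ (i : Fin m) (S : Finset (Fin m)), a i + b S ∈ A ↔ i ∈ S

/-- `A ⊆ G` has the `m`-`IP₂` property (i.e. `VC₂`-dimension at least `m`). -/
def HasIP2 {G : Type*} [AddCommGroup G] (A : Set G) (m : ℕ) : Prop :=
  ∃ (a b : Fin m → G) (c : Finset (Fin m × Fin m) → G),
    ∀ (i j : Fin m) (S : Finset (Fin m × Fin m)), a i + b j + c S ∈ A ↔ (i, j) ∈ S

variable {p : ℕ}

/-- The atom of the linear factor `L` labelled by `a`. -/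
def linAtom [NeZero p] {n ℓ : ℕ} (L : Fin ℓ → (Fin n → ZMod p)) (a : Fin ℓ → ZMod p) :
    Finset (Fin n → ZMod p) :=
  Finset.univ.filter fun x => ∀ i, x ⬝ᵥ L i = a i

/-- A quadratic factor on `𝔽_p^n` of complexity `(ℓ, q)`: `ℓ` linearly independent vectors
together with `q` symmetric `n × n` matrices over `𝔽_p`. -/
structure QuadFactor (p n ℓ q : ℕ) where
  L : Fin ℓ → (Fin n → ZMod p)
  M : Fin q → Matrix (Fin n) (Fin n) (ZMod p)
  indep : LinearIndependent (ZMod p) L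
  symm : ∀ j, (M j).IsSymm

/-- The atom of a quadratic factor labelled by `a = (linear label, quadratic label)`. -/
def qAtom [NeZero p] {n ℓ q : ℕ} (F : QuadFactor p n ℓ q)
    (a : (Fin ℓ → ZMod p) × (Fin q → ZMod p)) : Finset (Fin n → ZMod p) :=
  Finset.univ.filter fun x =>
    (∀ i, x ⬝ᵥ F.L i = a.1 i) ∧ ∀ j, x ⬝ᵥ (F.M j *ᵥ x) = a.2 j

/-- The set of (nonempty) atoms of a quadratic factor. -/
def atoms [NeZero p] {n ℓ q : ℕ} (F : QuadFactor p n ℓ q) :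
    Finset (Finset (Fin n → ZMod p)) :=
  ((Finset.univ : Finset ((Fin ℓ → ZMod p) × (Fin q → ZMod p))).image fun a => qAtom F a).filter
    fun B => B.Nonempty

/-- The quadratic factor `F` has rank at least `r`: every nontrivial linear combination of its
matrices has rank at least `r`. -/
def rankGe {n ℓ q : ℕ} (F : QuadFactor p n ℓ q) (r : ℝ) : Prop :=
  ∀ lam : Fin q → ZMod p, lam ≠ 0 → r ≤ ((∑ j, lam j • F.M j).rank : ℝ)

/-- The bilinear level set `β(b)`. -/
def bilinSet [NeZero p] {n q : ℕ} (M : Fin q → Matrix (Fin n) (Fin n) (ZMod p))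
    (b : Fin q → ZMod p) : Finset ((Fin n → ZMod p) × (Fin n → ZMod p)) :=
  Finset.univ.filter fun xy => ∀ j, xy.1 ⬝ᵥ (M j *ᵥ xy.2) = b j

/-- The characteristic measure `μ_{β(b)}` of a bilinear level set. -/
def bmu [NeZero p] {n q : ℕ} (M : Fin q → Matrix (Fin n) (Fin n) (ZMod p))
    (b : Fin q → ZMod p) (x y : Fin n → ZMod p) : ℝ :=
  if (x, y) ∈ bilinSet M b then ((p : ℝ) ^ (2 * n)) / ((bilinSet M b).card : ℝ) else 0

/-- The label `Σ(d)` of the atom on which the local `U³` inner product evaluates its inputs. -/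
def sigmaLabel {p : ℕ} {ℓ q : ℕ} (a₁ a₂ a₃ : (Fin ℓ → ZMod p) × (Fin q → ZMod p))
    (b₁₂ b₁₃ b₂₃ : Fin q → ZMod p) : (Fin ℓ → ZMod p) × (Fin q → ZMod p) :=
  (a₁.1 + a₂.1 + a₃.1, a₁.2 + a₂.2 + a₃.2 + 2 • (b₁₂ + b₁₃ + b₂₃))

/-- The local `U²` inner product relative to the atoms `L(a₁)`, `L(a₂)`. -/
def localU2Inner [NeZero p] {n ℓ : ℕ} (L : Fin ℓ → (Fin n → ZMod p)) (a₁ a₂ : Fin ℓ → ZMod p)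
    (f : (Fin 2 → Bool) → (Fin n → ZMod p) → ℂ) : ℂ :=
  expC (linAtom L a₁) fun x₀ => expC (linAtom L a₁) fun x₁ =>
  expC (linAtom L a₂) fun y₀ => expC (linAtom L a₂) fun y₁ =>
  ∏ ε : Fin 2 → Bool, cConj (wt ε) (f ε (bsel (ε 0) x₀ x₁ + bsel (ε 1) y₀ y₁))

/-- The local `U²` semi-norm. -/
def localU2Norm [NeZero p] {n ℓ : ℕ} (L : Fin ℓ → (Fin n → ZMod p)) (a₁ a₂ : Fin ℓ → ZMod p)
    (f : (Fin n → ZMod p) → ℂ) : ℝ :=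
  (localU2Inner L a₁ a₂ fun _ => f).re ^ ((1 : ℝ) / 4)

/-- The (global) `U²` inner product on `𝔽_p^n`. -/
def U2Inner [NeZero p] {n : ℕ} (f : (Fin 2 → Bool) → (Fin n → ZMod p) → ℂ) : ℂ :=
  expC (Finset.univ : Finset (Fin n → ZMod p)) fun x₀ =>
  expC (Finset.univ : Finset (Fin n → ZMod p)) fun x₁ =>
  expC (Finset.univ : Finset (Fin n → ZMod p)) fun y₀ =>
  expC (Finset.univ : Finset (Fin n → ZMod p)) fun y₁ =>
  ∏ ε : Fin 2 → Bool, cConj (wt ε) (f ε (bsel (ε 0) x₀ x₁ + bsel (ε 1) y₀ y₁))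

/-- The Gowers `U²` norm on `𝔽_p^n`. -/
def U2Norm [NeZero p] {n : ℕ} (f : (Fin n → ZMod p) → ℂ) : ℝ :=
  (U2Inner fun _ => f).re ^ ((1 : ℝ) / 4)

/-- The (global) `U³` inner product on `𝔽_p^n`. -/
def U3Inner [NeZero p] {n : ℕ} (f : (Fin 3 → Bool) → (Fin n → ZMod p) → ℂ) : ℂ :=
  expC (Finset.univ : Finset (Fin n → ZMod p)) fun x₀ =>
  expC (Finset.univ : Finset (Fin n → ZMod p)) fun x₁ =>
  expC (Finset.univ : Finset (Fin n → ZMod p)) fun y₀ =>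
  expC (Finset.univ : Finset (Fin n → ZMod p)) fun y₁ =>
  expC (Finset.univ : Finset (Fin n → ZMod p)) fun z₀ =>
  expC (Finset.univ : Finset (Fin n → ZMod p)) fun z₁ =>
  ∏ ω : Fin 3 → Bool,
    cConj (wt ω) (f ω (bsel (ω 0) x₀ x₁ + bsel (ω 1) y₀ y₁ + bsel (ω 2) z₀ z₁))

/-- The Gowers `U³` norm on `𝔽_p^n`. -/
def U3Norm [NeZero p] {n : ℕ} (f : (Fin n → ZMod p) → ℂ) : ℝ :=
  (U3Inner fun _ => f).re ^ ((1 : ℝ) / 8)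

/-- The local `U³` inner product relative to a quadratic factor, with label tuple
`d = (a₁, a₂, a₃, b₁₂, b₁₃, b₂₃)`. -/
def localU3Inner [NeZero p] {n ℓ q : ℕ} (F : QuadFactor p n ℓ q)
    (a₁ a₂ a₃ : (Fin ℓ → ZMod p) × (Fin q → ZMod p)) (b₁₂ b₁₃ b₂₃ : Fin q → ZMod p)
    (f : (Fin 3 → Bool) → (Fin n → ZMod p) → ℂ) : ℂ :=
  expC (qAtom F a₁) fun x₀ => expC (qAtom F a₁) fun x₁ =>
  expC (qAtom F a₂) fun y₀ => expC (qAtom F a₂) fun y₁ =>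
  expC (qAtom F a₃) fun z₀ => expC (qAtom F a₃) fun z₁ =>
  (∏ ij : Bool × Bool, (bmu F.M b₁₂ (bsel ij.1 x₀ x₁) (bsel ij.2 y₀ y₁) : ℂ)) *
  (∏ ik : Bool × Bool, (bmu F.M b₁₃ (bsel ik.1 x₀ x₁) (bsel ik.2 z₀ z₁) : ℂ)) *
  (∏ jk : Bool × Bool, (bmu F.M b₂₃ (bsel jk.1 y₀ y₁) (bsel jk.2 z₀ z₁) : ℂ)) *
  ∏ ω : Fin 3 → Bool,
    cConj (wt ω) (f ω (bsel (ω 0) x₀ x₁ + bsel (ω 1) y₀ y₁ + bsel (ω 2) z₀ z₁))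

/-- The local `U³` semi-norm. -/
def localU3Norm [NeZero p] {n ℓ q : ℕ} (F : QuadFactor p n ℓ q)
    (a₁ a₂ a₃ : (Fin ℓ → ZMod p) × (Fin q → ZMod p)) (b₁₂ b₁₃ b₂₃ : Fin q → ZMod p)
    (f : (Fin n → ZMod p) → ℂ) : ℝ :=
  (localU3Inner F a₁ a₂ a₃ b₁₂ b₁₃ b₂₃ fun _ => f).re ^ ((1 : ℝ) / 8)

/-- The `m`-`IP` operator. -/
def IPop [NeZero p] {n : ℕ} (m : ℕ) (f : Fin m → Finset (Fin m) → (Fin n → ZMod p) → ℂ) : ℂ :=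
  expC (Finset.univ : Finset (Fin m → Fin n → ZMod p)) fun x =>
  expC (Finset.univ : Finset (Finset (Fin m) → Fin n → ZMod p)) fun y =>
  ∏ i, ∏ S, f i S (x i + y S)

/-- The `m`-`IP₂` operator. -/
def IP2op [NeZero p] {n : ℕ} (m : ℕ)
    (f : Fin m → Fin m → Finset (Fin m × Fin m) → (Fin n → ZMod p) → ℂ) : ℂ :=
  expC (Finset.univ : Finset (Fin m → Fin n → ZMod p)) fun x =>
  expC (Finset.univ : Finset (Fin m → Fin n → ZMod p)) fun y =>
  expC (Finset.univ : Finset (Finset (Fin m × Fin m) → Fin n → ZMod p)) fun z =>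
  ∏ i, ∏ j, ∏ S, f i j S (x i + y j + z S)

/-- The local `m`-`IP` operator relative to the atoms `L(a₁)`, `L(a₂)`. -/
def localIPop [NeZero p] {n ℓ : ℕ} (m : ℕ) (L : Fin ℓ → (Fin n → ZMod p))
    (a₁ a₂ : Fin ℓ → ZMod p) (f : Fin m → Finset (Fin m) → (Fin n → ZMod p) → ℂ) : ℂ :=
  expC (Fintype.piFinset fun _ : Fin m => linAtom L a₁) fun x =>
  expC (Fintype.piFinset fun _ : Finset (Fin m) => linAtom L a₂) fun y =>
  ∏ i, ∏ S, f i S (x i + y S)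

/-- The local `m`-`IP₂` operator relative to a quadratic factor with label tuple `d`. -/
def localIP2op [NeZero p] {n ℓ q : ℕ} (m : ℕ) (F : QuadFactor p n ℓ q)
    (a₁ a₂ a₃ : (Fin ℓ → ZMod p) × (Fin q → ZMod p)) (b₁₂ b₁₃ b₂₃ : Fin q → ZMod p)
    (f : Fin m → Fin m → Finset (Fin m × Fin m) → (Fin n → ZMod p) → ℂ) : ℂ :=
  expC (Fintype.piFinset fun _ : Fin m => qAtom F a₁) fun x =>
  expC (Fintype.piFinset fun _ : Fin m => qAtom F a₂) fun y =>
  expC (Fintype.piFinset fun _ : Finset (Fin m × Fin m) => qAtom F a₃) fun z =>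
    (∏ i, ∏ j, (bmu F.M b₁₂ (x i) (y j) : ℂ)) *
    (∏ i, ∏ S, (bmu F.M b₁₃ (x i) (z S) : ℂ)) *
    (∏ j, ∏ S, (bmu F.M b₂₃ (y j) (z S) : ℂ)) *
    ∏ i, ∏ j, ∏ S, f i j S (x i + y j + z S)

/-- The ternary multi-local `F`-operator, for a `3`-partite `3`-uniform hypergraph with parts
`U`, `V`, `W` and label tuples `e_{uvw} = (a u, b v, c w, d₁₂ u v, d₁₃ u w, d₂₃ v w)`. -/
def TFop [NeZero p] {n ℓ q m : ℕ} (F : QuadFactor p n ℓ q) (U V W : Finset (Fin m))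
    (a b c : Fin m → (Fin ℓ → ZMod p) × (Fin q → ZMod p))
    (d₁₂ d₁₃ d₂₃ : Fin m → Fin m → (Fin q → ZMod p))
    (g : Fin m → Fin m → Fin m → (Fin n → ZMod p) → ℂ) : ℂ :=
  expC (Fintype.piFinset fun u : {u // u ∈ U} => qAtom F (a u.1)) fun x =>
  expC (Fintype.piFinset fun v : {v // v ∈ V} => qAtom F (b v.1)) fun y =>
  expC (Fintype.piFinset fun w : {w // w ∈ W} => qAtom F (c w.1)) fun z =>
    (∏ u, ∏ v, (bmu F.M (d₁₂ u.1 v.1) (x u) (y v) : ℂ)) *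
    (∏ u, ∏ w, (bmu F.M (d₁₃ u.1 w.1) (x u) (z w) : ℂ)) *
    (∏ v, ∏ w, (bmu F.M (d₂₃ v.1 w.1) (y v) (z w) : ℂ)) *
    ∏ u, ∏ v, ∏ w, g u.1 v.1 w.1 (x u + y v + z w)

end
section Helpers

variable {α β : Type*}

lemma expC_congr {s : Finset α} {f g : α → ℂ} (h : ∀ x ∈ s, f x = g x) :
    expC s f = expC s g := by
  unfold expC; rw [Finset.sum_congr rfl h]

lemma expR_congr {s : Finset α} {f g : α → ℝ} (h : ∀ x ∈ s, f x = g x) :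
    expR s f = expR s g := by
  unfold expR; rw [Finset.sum_congr rfl h]

lemma expC_const (s : Finset α) (hs : s.Nonempty) (c : ℂ) : expC s (fun _ => c) = c := by
  unfold expC
  rw [Finset.sum_const, nsmul_eq_mul, ← mul_assoc, inv_mul_cancel₀, one_mul]
  exact_mod_cast Nat.cast_ne_zero.mpr hs.card_ne_zero

lemma expC_mul_left (s : Finset α) (c : ℂ) (f : α → ℂ) :
    expC s (fun x => c * f x) = c * expC s f := by
  unfold expC; rw [← Finset.mul_sum]; ring

lemma expC_sub (s : Finset α) (f g : α → ℂ) :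
    expC s (fun x => f x - g x) = expC s f - expC s g := by
  unfold expC; rw [Finset.sum_sub_distrib]; ring

lemma expC_comm (s : Finset α) (t : Finset β) (F : α → β → ℂ) :
    expC s (fun a => expC t (fun b => F a b)) = expC t (fun b => expC s (fun a => F a b)) := by
  unfold expC
  simp only [← Finset.mul_sum]
  rw [Finset.sum_comm]
  ring

lemma conj_expC (s : Finset α) (f : α → ℂ) :
    (starRingEnd ℂ) (expC s f) = expC s (fun x => (starRingEnd ℂ) (f x)) := by
  unfold expC
  rw [map_mul, map_inv₀, map_sum]
  simp

lemma expC_pair (s : Finset α) (G : α → α → ℂ) :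
    expC s (fun x₀ => expC s (fun x₁ => G x₀ x₁)) = expC (s ×ˢ s) (fun q => G q.1 q.2) := by
  unfold expC
  simp only [← Finset.mul_sum, Finset.card_product, Finset.sum_product, Nat.cast_mul, mul_inv]
  ring

lemma expC_mul_expC (s : Finset α) (F G : α → ℂ) :
    expC s F * expC s G = expC s (fun x₀ => expC s (fun x₁ => F x₀ * G x₁)) := by
  unfold expC
  simp only [← Finset.mul_sum]
  rw [← Finset.sum_mul]
  ring

lemma norm_expC_le_expR (s : Finset α) (f : α → ℂ) :
    ‖expC s f‖ ≤ expR s (fun x => ‖f x‖) := by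
  unfold expC expR
  rw [norm_mul]
  have h1 : ‖((s.card : ℂ))⁻¹‖ = ((s.card : ℝ))⁻¹ := by
    simp
  rw [h1]
  exact mul_le_mul_of_nonneg_left (norm_sum_le _ _) (by positivity)

lemma expR_nonneg {s : Finset α} {f : α → ℝ} (h : ∀ x ∈ s, 0 ≤ f x) : 0 ≤ expR s f := by
  unfold expR
  have h2 : 0 ≤ ∑ x ∈ s, f x := Finset.sum_nonneg h
  have h3 : (0:ℝ) ≤ ((s.card : ℝ))⁻¹ := by positivity
  exact mul_nonneg h3 h2

lemma expR_mono {s : Finset α} {f g : α → ℝ} (h : ∀ x ∈ s, f x ≤ g x) :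
    expR s f ≤ expR s g := by
  unfold expR
  exact mul_le_mul_of_nonneg_left (Finset.sum_le_sum h) (by positivity)

lemma expR_le_const {s : Finset α} {f : α → ℝ} {B : ℝ} (hB : 0 ≤ B) (h : ∀ x ∈ s, f x ≤ B) :
    expR s f ≤ B := by
  unfold expR
  rcases s.eq_empty_or_nonempty with rfl | hs
  · simpa using hB
  · have hc : (0:ℝ) < s.card := by exact_mod_cast hs.card_pos
    calc (s.card : ℝ)⁻¹ * ∑ x ∈ s, f x
        ≤ (s.card : ℝ)⁻¹ * (s.card * B) :=
          mul_le_mul_of_nonneg_left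
            ((Finset.sum_le_card_nsmul s f B h).trans_eq (by simp [nsmul_eq_mul])) (by positivity)
      _ = B := by field_simp

lemma norm_expC_le {s : Finset α} {f : α → ℂ} {B : ℝ} (hB : 0 ≤ B) (h : ∀ x ∈ s, ‖f x‖ ≤ B) :
    ‖expC s f‖ ≤ B :=
  (norm_expC_le_expR s f).trans (expR_le_const hB h)

lemma expR_sq_le (s : Finset α) (f : α → ℝ) :
    (expR s f) ^ 2 ≤ expR s (fun x => f x ^ 2) := by
  unfold expR
  rcases s.eq_empty_or_nonempty with rfl | hs
  · simp
  have hc : (0:ℝ) < s.card := by exact_mod_cast hs.card_pos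
  rw [mul_pow]
  have := sq_sum_le_card_mul_sum_sq (s := s) (f := f)
  calc ((s.card:ℝ)⁻¹)^2 * (∑ x ∈ s, f x)^2
      ≤ ((s.card:ℝ)⁻¹)^2 * (s.card * ∑ x ∈ s, f x ^ 2) :=
        mul_le_mul_of_nonneg_left (by exact_mod_cast this) (by positivity)
    _ = (s.card:ℝ)⁻¹ * ∑ x ∈ s, f x ^ 2 := by field_simp

lemma expC_re (s : Finset α) (f : α → ℂ) : (expC s f).re = expR s (fun x => (f x).re) := by
  unfold expC expR
  rw [show ((s.card : ℂ))⁻¹ = ((((s.card : ℝ))⁻¹ : ℝ) : ℂ) by push_cast; ring]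
  rw [Complex.re_ofReal_mul, Complex.re_sum]

open Finset in
lemma sum_piFinset_split {ι β M : Type*} [Fintype ι] [DecidableEq ι] [DecidableEq β]
    [AddCommMonoid M] (X : ι → Finset β) (i₀ : ι) (x₀ : β) (hx₀ : x₀ ∈ X i₀)
    (F : (ι → β) → M) :
    ∑ x ∈ Fintype.piFinset X, F x
      = ∑ t ∈ X i₀, ∑ x ∈ Fintype.piFinset (Function.update X i₀ {x₀}),
          F (Function.update x i₀ t) := by
  rw [← Finset.sum_product']
  refine Finset.sum_bij' (fun x _ => ((x i₀, Function.update x i₀ x₀) : β × (ι → β)))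
    (fun q _ => Function.update q.2 i₀ q.1) ?_ ?_ ?_ ?_ ?_
  · intro x hx
    rw [Finset.mem_product]
    constructor
    · exact (Fintype.mem_piFinset.mp hx) i₀
    · rw [Fintype.mem_piFinset]
      intro i
      rcases eq_or_ne i i₀ with rfl | hi
      · simp
      · simp only [Function.update_of_ne hi]
        exact (Fintype.mem_piFinset.mp hx) i
  · intro q hq
    rw [Finset.mem_product] at hq
    rw [Fintype.mem_piFinset]
    intro i
    rcases eq_or_ne i i₀ with rfl | hi
    · simpa using hq.1
    · simp only [Function.update_of_ne hi]
      have := (Fintype.mem_piFinset.mp hq.2) i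
      rwa [Function.update_of_ne hi] at this
  · intro x hx
    simp [Function.update_idem]
  · intro q hq
    rw [Finset.mem_product] at hq
    have h2 := (Fintype.mem_piFinset.mp hq.2) i₀
    simp only [Function.update_self] at h2 ⊢
    have : q.2 i₀ = x₀ := by simpa using h2
    ext <;> simp [Function.update_idem, ← this, Function.update_eq_self]
  · intro x hx
    simp [Function.update_idem, Function.update_eq_self]

lemma expC_piFinset_split {ι β : Type*} [Fintype ι] [DecidableEq ι] [DecidableEq β]
    (X : ι → Finset β) (i₀ : ι) (x₀ : β) (hx₀ : x₀ ∈ X i₀) (F : (ι → β) → ℂ) :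
    expC (Fintype.piFinset X) F
      = expC (X i₀) (fun t => expC (Fintype.piFinset (Function.update X i₀ {x₀}))
          (fun x => F (Function.update x i₀ t))) := by
  unfold expC
  rw [sum_piFinset_split X i₀ x₀ hx₀ F]
  simp only [← Finset.mul_sum, Fintype.card_piFinset]
  have hcard : (∏ i, (X i).card) = (X i₀).card * ∏ i, (Function.update X i₀ ({x₀} : Finset β) i).card := by
    have h1 : ∀ i, (Function.update X i₀ ({x₀} : Finset β) i).card
        = Function.update (fun i => (X i).card) i₀ 1 i := by
      intro i
      rcases eq_or_ne i i₀ with rfl | hi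
      · simp
      · simp [Function.update_of_ne hi]
    simp only [h1]
    rw [Finset.prod_update_of_mem (Finset.mem_univ i₀),
      ← Finset.mul_prod_erase Finset.univ _ (Finset.mem_univ i₀), one_mul,
      Finset.erase_eq]
  rw [hcard]
  push_cast
  ring

end Helpers


section B3
open Finset

lemma linAtom_nonempty {p n ℓ : ℕ} [NeZero p] (hp : p.Prime)
    {L : Fin ℓ → (Fin n → ZMod p)} (hL : LinearIndependent (ZMod p) L)
    (a : Fin ℓ → ZMod p) : (linAtom L a).Nonempty := by
  haveI := Fact.mk hp
  set T : (Fin n → ZMod p) →ₗ[ZMod p] (Fin ℓ → ZMod p) :=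
    { toFun := fun x i => dotProduct x (L i)
      map_add' := by intro x y; funext i; simp [add_dotProduct]
      map_smul' := by intro c x; funext i; simp [smul_dotProduct] } with hT
  have hsurj : Function.Surjective T := by
    rw [← LinearMap.range_eq_top]
    by_contra hne
    have hlt : LinearMap.range T < ⊤ := lt_top_iff_ne_top.mpr hne
    obtain ⟨φ, hφ0, hφ⟩ :=
      Submodule.exists_dual_map_eq_bot_of_lt_top hlt inferInstance
    have hker : ∀ x, φ (T x) = 0 := by
      intro x
      have hmem : φ (T x) ∈ Submodule.map φ (LinearMap.range T) :=
        Submodule.mem_map_of_mem (LinearMap.mem_range_self T x)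
      rw [hφ] at hmem
      exact (Submodule.mem_bot _).mp hmem
    have key : ∀ x : Fin n → ZMod p,
        φ (T x) = dotProduct x (∑ i, (φ fun j => if i = j then 1 else 0) • L i) := by
      intro x
      rw [LinearMap.pi_apply_eq_sum_univ φ (T x)]
      simp only [hT, LinearMap.coe_mk, AddHom.coe_mk, dotProduct, smul_eq_mul,
        Finset.sum_apply, Pi.smul_apply, Finset.sum_mul, Finset.mul_sum]
      rw [Finset.sum_comm]
      exact Finset.sum_congr rfl fun i _ => Finset.sum_congr rfl fun j _ => by ring
    have hvec : (∑ i, (φ fun j => if i = j then 1 else 0) • L i) = 0 := by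
      apply dotProduct_eq_zero
      intro w
      rw [dotProduct_comm, ← key w]
      exact hker w
    have hc0 : ∀ i : Fin ℓ, (φ fun j => if i = j then 1 else 0) = 0 :=
      Fintype.linearIndependent_iff.mp hL _ hvec
    apply hφ0
    refine LinearMap.ext fun y => ?_
    rw [LinearMap.pi_apply_eq_sum_univ φ y]
    simp [hc0]
  obtain ⟨x, hx⟩ := hsurj a
  refine ⟨x, ?_⟩
  simp only [linAtom, Finset.mem_filter, Finset.mem_univ, true_and]
  intro i
  exact congrFun hx i

lemma prod4 {G : Type*} [Add G] (f : G → ℂ) (x₀ x₁ y₀ y₁ : G) :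
    (∏ ε : Fin 2 → Bool, cConj (wt ε) (f (bsel (ε 0) x₀ x₁ + bsel (ε 1) y₀ y₁)))
      = (f (x₀ + y₀) * (starRingEnd ℂ) (f (x₀ + y₁)))
        * ((starRingEnd ℂ) (f (x₁ + y₀)) * f (x₁ + y₁)) := by
  have huniv : (Finset.univ : Finset (Fin 2 → Bool))
      = {![false, false], ![false, true], ![true, false], ![true, true]} := by decide
  rw [huniv, Finset.prod_insert (by decide), Finset.prod_insert (by decide),
    Finset.prod_insert (by decide), Finset.prod_singleton]
  have w00 : wt ![false, false] = 0 := by decide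
  have w01 : wt ![false, true] = 1 := by decide
  have w10 : wt ![true, false] = 1 := by decide
  have w11 : wt ![true, true] = 2 := by decide
  rw [w00, w01, w10, w11]
  simp only [cConj, bsel, Matrix.cons_val_zero, Matrix.cons_val_one, Matrix.head_cons]
  norm_num
  ring

end B3

set_option maxHeartbeats 1000000 in
lemma inner_eq {p n ℓ : ℕ} [NeZero p] (L : Fin ℓ → (Fin n → ZMod p)) (a₁ a₂ : Fin ℓ → ZMod p)
    (f : (Fin n → ZMod p) → ℂ) :
    localU2Inner L a₁ a₂ (fun _ => f)
      = expC ((linAtom L a₂) ×ˢ (linAtom L a₂)) (fun q =>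
          (expC (linAtom L a₁) fun x => f (x + q.1) * (starRingEnd ℂ) (f (x + q.2)))
          * (starRingEnd ℂ)
            (expC (linAtom L a₁) fun x => f (x + q.1) * (starRingEnd ℂ) (f (x + q.2)))) := by
  set X := linAtom L a₁ with hX
  set Y := linAtom L a₂ with hY
  calc localU2Inner L a₁ a₂ (fun _ => f)
      = expC X fun x₀ => expC X fun x₁ => expC Y fun y₀ => expC Y fun y₁ =>
          (f (x₀ + y₀) * (starRingEnd ℂ) (f (x₀ + y₁)))
            * ((starRingEnd ℂ) (f (x₁ + y₀)) * f (x₁ + y₁)) := by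
        unfold localU2Inner
        refine expC_congr fun x₀ _ => expC_congr fun x₁ _ => expC_congr fun y₀ _ =>
          expC_congr fun y₁ _ => ?_
        exact prod4 f x₀ x₁ y₀ y₁
    _ = expC X fun x₀ => expC X fun x₁ => expC (Y ×ˢ Y) fun q =>
          (f (x₀ + q.1) * (starRingEnd ℂ) (f (x₀ + q.2)))
            * ((starRingEnd ℂ) (f (x₁ + q.1)) * f (x₁ + q.2)) :=
        expC_congr fun x₀ _ => expC_congr fun x₁ _ => expC_pair Y _
    _ = expC (X ×ˢ X) fun pq => expC (Y ×ˢ Y) fun q =>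
          (f (pq.1 + q.1) * (starRingEnd ℂ) (f (pq.1 + q.2)))
            * ((starRingEnd ℂ) (f (pq.2 + q.1)) * f (pq.2 + q.2)) := expC_pair X _
    _ = expC (Y ×ˢ Y) fun q => expC (X ×ˢ X) fun pq =>
          (f (pq.1 + q.1) * (starRingEnd ℂ) (f (pq.1 + q.2)))
            * ((starRingEnd ℂ) (f (pq.2 + q.1)) * f (pq.2 + q.2)) := expC_comm _ _ _
    _ = expC (Y ×ˢ Y) fun q => expC X fun x₀ => expC X fun x₁ =>
          (f (x₀ + q.1) * (starRingEnd ℂ) (f (x₀ + q.2)))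
            * ((starRingEnd ℂ) (f (x₁ + q.1)) * f (x₁ + q.2)) :=
        expC_congr fun q _ => (expC_pair X (fun x₀ x₁ =>
          (f (x₀ + q.1) * (starRingEnd ℂ) (f (x₀ + q.2)))
            * ((starRingEnd ℂ) (f (x₁ + q.1)) * f (x₁ + q.2)))).symm
    _ = _ := expC_congr fun q _ => by
        rw [conj_expC, expC_mul_expC]
        exact expC_congr fun x₀ _ => expC_congr fun x₁ _ => by
          simp only [map_mul, Complex.conj_conj]

lemma inner_re_eq {p n ℓ : ℕ} [NeZero p] (L : Fin ℓ → (Fin n → ZMod p)) (a₁ a₂ : Fin ℓ → ZMod p)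
    (f : (Fin n → ZMod p) → ℂ) :
    (localU2Inner L a₁ a₂ (fun _ => f)).re
      = expR ((linAtom L a₂) ×ˢ (linAtom L a₂)) (fun q =>
          ‖expC (linAtom L a₁) fun x => f (x + q.1) * (starRingEnd ℂ) (f (x + q.2))‖ ^ 2) := by
  rw [inner_eq, expC_re]
  exact expR_congr fun q _ => by
    rw [Complex.mul_conj]
    simp [Complex.normSq_eq_norm_sq, ← Complex.ofReal_pow, Complex.ofReal_re]

lemma inner_re_nonneg {p n ℓ : ℕ} [NeZero p] (L : Fin ℓ → (Fin n → ZMod p))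
    (a₁ a₂ : Fin ℓ → ZMod p) (f : (Fin n → ZMod p) → ℂ) :
    0 ≤ (localU2Inner L a₁ a₂ (fun _ => f)).re := by
  rw [inner_re_eq]
  exact expR_nonneg fun q _ => by positivity

lemma localU2Norm_nonneg {p n ℓ : ℕ} [NeZero p] (L : Fin ℓ → (Fin n → ZMod p))
    (a₁ a₂ : Fin ℓ → ZMod p) (f : (Fin n → ZMod p) → ℂ) :
    0 ≤ localU2Norm L a₁ a₂ f :=
  Real.rpow_nonneg (inner_re_nonneg L a₁ a₂ f) _

lemma localU2Norm_neg {p n ℓ : ℕ} [NeZero p] (L : Fin ℓ → (Fin n → ZMod p))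
    (a₁ a₂ : Fin ℓ → ZMod p) (f : (Fin n → ZMod p) → ℂ) :
    localU2Norm L a₁ a₂ (fun x => -(f x)) = localU2Norm L a₁ a₂ f := by
  have h : localU2Inner L a₁ a₂ (fun _ => (fun x => -(f x)))
      = localU2Inner L a₁ a₂ (fun _ => f) := by
    rw [inner_eq, inner_eq]
    refine expC_congr fun q _ => ?_
    have hS : (expC (linAtom L a₁) fun x =>
          (fun x => -(f x)) (x + q.1) * (starRingEnd ℂ) ((fun x => -(f x)) (x + q.2)))
        = expC (linAtom L a₁) fun x => f (x + q.1) * (starRingEnd ℂ) (f (x + q.2)) :=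
      expC_congr fun x _ => by simp [map_neg, neg_mul_neg]
    rw [hS]
  unfold localU2Norm
  rw [h]

set_option maxHeartbeats 1000000 in
lemma vn {p n ℓ : ℕ} [NeZero p] (L : Fin ℓ → (Fin n → ZMod p)) (a₁ a₂ : Fin ℓ → ZMod p)
    (f aa bb : (Fin n → ZMod p) → ℂ) (ha : ∀ t, ‖aa t‖ ≤ 1) (hb : ∀ r, ‖bb r‖ ≤ 1) :
    ‖expC (linAtom L a₁) fun t => expC (linAtom L a₂) fun r => f (t + r) * (aa t * bb r)‖
      ≤ localU2Norm L a₁ a₂ f := by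
  set X := linAtom L a₁ with hX
  set Y := linAtom L a₂ with hY
  set g : (Fin n → ZMod p) → ℂ := fun t => expC Y fun r => f (t + r) * bb r with hg
  have step0 : (expC X fun t => expC Y fun r => f (t + r) * (aa t * bb r))
      = expC X fun t => aa t * g t := by
    refine expC_congr fun t _ => ?_
    rw [hg, ← expC_mul_left]
    exact expC_congr fun r _ => by ring
  rw [step0]
  have h1 : ‖expC X fun t => aa t * g t‖ ≤ expR X fun t => ‖g t‖ := by
    refine (norm_expC_le_expR _ _).trans (expR_mono fun t _ => ?_)
    rw [norm_mul]
    calc ‖aa t‖ * ‖g t‖ ≤ 1 * ‖g t‖ := by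
          exact mul_le_mul_of_nonneg_right (ha t) (norm_nonneg _)
      _ = ‖g t‖ := one_mul _
  have h2 : (expR X fun t => ‖g t‖) ^ 2 ≤ expR X fun t => ‖g t‖ ^ 2 := expR_sq_le _ _
  have h3 : (expR X fun t => ‖g t‖ ^ 2)
      = (expC X fun t => g t * (starRingEnd ℂ) (g t)).re := by
    rw [expC_re]
    exact expR_congr fun t _ => by
      rw [Complex.mul_conj]
      simp [Complex.normSq_eq_norm_sq, ← Complex.ofReal_pow, Complex.ofReal_re]
  have h4 : (expC X fun t => g t * (starRingEnd ℂ) (g t))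
      = expC (Y ×ˢ Y) fun q => (bb q.1 * (starRingEnd ℂ) (bb q.2))
          * (expC X fun x => f (x + q.1) * (starRingEnd ℂ) (f (x + q.2))) := by
    calc (expC X fun t => g t * (starRingEnd ℂ) (g t))
        = expC X fun t => expC (Y ×ˢ Y) fun q =>
            (f (t + q.1) * bb q.1) * (starRingEnd ℂ) (f (t + q.2) * bb q.2) := by
          refine expC_congr fun t _ => ?_
          rw [hg, conj_expC, expC_mul_expC, expC_pair]
      _ = expC (Y ×ˢ Y) fun q => expC X fun t =>
            (f (t + q.1) * bb q.1) * (starRingEnd ℂ) (f (t + q.2) * bb q.2) := expC_comm _ _ _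
      _ = _ := by
          refine expC_congr fun q _ => ?_
          rw [← expC_mul_left]
          exact expC_congr fun t _ => by simp only [map_mul]; ring
  have h5 : (expC X fun t => g t * (starRingEnd ℂ) (g t)).re
      ≤ expR (Y ×ˢ Y) fun q =>
          ‖expC X fun x => f (x + q.1) * (starRingEnd ℂ) (f (x + q.2))‖ := by
    rw [h4]
    refine (Complex.re_le_norm _).trans ?_
    refine (norm_expC_le_expR _ _).trans (expR_mono fun q _ => ?_)
    rw [norm_mul, norm_mul]
    have hb1 : ‖bb q.1‖ * ‖(starRingEnd ℂ) (bb q.2)‖ ≤ 1 := by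
      rw [RCLike.norm_conj]
      exact mul_le_one₀ (hb q.1) (norm_nonneg _) (hb q.2)
    calc ‖bb q.1‖ * ‖(starRingEnd ℂ) (bb q.2)‖ * ‖_‖ ≤ 1 * ‖_‖ :=
          mul_le_mul_of_nonneg_right hb1 (norm_nonneg _)
      _ = _ := one_mul _
  have h6 : (expR (Y ×ˢ Y) fun q =>
        ‖expC X fun x => f (x + q.1) * (starRingEnd ℂ) (f (x + q.2))‖) ^ 2
      ≤ (localU2Inner L a₁ a₂ (fun _ => f)).re := by
    rw [inner_re_eq]
    exact expR_sq_le _ _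
  -- assemble
  set t := ‖expC X fun t => aa t * g t‖ with ht
  have htn : 0 ≤ t := norm_nonneg _
  have hQn : 0 ≤ expR X fun t => ‖g t‖ := expR_nonneg fun _ _ => norm_nonneg _
  have hWn : 0 ≤ expR (Y ×ˢ Y) fun q =>
      ‖expC X fun x => f (x + q.1) * (starRingEnd ℂ) (f (x + q.2))‖ :=
    expR_nonneg fun _ _ => norm_nonneg _
  have hRn : 0 ≤ expR X fun t => ‖g t‖ ^ 2 := expR_nonneg fun _ _ => sq_nonneg _
  have key : t ^ 4 ≤ (localU2Inner L a₁ a₂ (fun _ => f)).re := by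
    have ht2 : t ^ 2 ≤ expR X fun t => ‖g t‖ ^ 2 :=
      le_trans (pow_le_pow_left₀ htn h1 2) h2
    have hRW : (expR X fun t => ‖g t‖ ^ 2) ≤ expR (Y ×ˢ Y) fun q =>
        ‖expC X fun x => f (x + q.1) * (starRingEnd ℂ) (f (x + q.2))‖ := by
      rw [h3]; exact h5
    calc t ^ 4 = (t ^ 2) ^ 2 := by ring
      _ ≤ (expR X fun t => ‖g t‖ ^ 2) ^ 2 := pow_le_pow_left₀ (sq_nonneg t) ht2 2
      _ ≤ (expR (Y ×ˢ Y) fun q =>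
            ‖expC X fun x => f (x + q.1) * (starRingEnd ℂ) (f (x + q.2))‖) ^ 2 :=
          pow_le_pow_left₀ hRn hRW 2
      _ ≤ _ := h6
  have hinn : 0 ≤ (localU2Inner L a₁ a₂ (fun _ => f)).re := inner_re_nonneg L a₁ a₂ f
  calc t = (t ^ 4) ^ ((1:ℝ)/4) := by
        rw [← Real.rpow_natCast t 4, ← Real.rpow_mul htn]; norm_num
    _ ≤ ((localU2Inner L a₁ a₂ (fun _ => f)).re) ^ ((1:ℝ)/4) :=
        Real.rpow_le_rpow (by positivity) key (by norm_num)
    _ = localU2Norm L a₁ a₂ f := rfl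

set_option maxHeartbeats 1000000 in
lemma core {p n ℓ : ℕ} [NeZero p] (L : Fin ℓ → (Fin n → ZMod p))
    (hne : ∀ a, (linAtom L a).Nonempty)
    {U V : Type*} [Fintype U] [Fintype V] [DecidableEq U] [DecidableEq V]
    (du : U → (Fin ℓ → ZMod p)) (dv : V → (Fin ℓ → ZMod p))
    (s : Finset (U × V)) (u₀ : U) (v₀ : V) (hs : (u₀, v₀) ∉ s)
    (f : (Fin n → ZMod p) → ℂ) (h : U × V → (Fin n → ZMod p) → ℂ)
    (hh : ∀ j t, ‖h j t‖ ≤ 1) :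
    ‖expC (Fintype.piFinset fun u => linAtom L (du u)) fun x =>
        expC (Fintype.piFinset fun v => linAtom L (dv v)) fun y =>
          f (x u₀ + y v₀) * ∏ j ∈ s, h j (x j.1 + y j.2)‖
      ≤ localU2Norm L (du u₀) (dv v₀) f := by
  obtain ⟨x₀, hx₀⟩ := hne (du u₀)
  obtain ⟨y₀, hy₀⟩ := hne (dv v₀)
  set X : U → Finset (Fin n → ZMod p) := fun u => linAtom L (du u) with hXdef
  set Y : V → Finset (Fin n → ZMod p) := fun v => linAtom L (dv v) with hYdef
  have key : (expC (Fintype.piFinset X) fun x => expC (Fintype.piFinset Y) fun y =>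
        f (x u₀ + y v₀) * ∏ j ∈ s, h j (x j.1 + y j.2))
      = expC (Fintype.piFinset (Function.update Y v₀ {y₀})) fun y' =>
          expC (Fintype.piFinset (Function.update X u₀ {x₀})) fun x' =>
            expC (X u₀) fun t => expC (Y v₀) fun r =>
              f (Function.update x' u₀ t u₀ + Function.update y' v₀ r v₀) *
                ∏ j ∈ s, h j (Function.update x' u₀ t j.1 + Function.update y' v₀ r j.2) := by
    calc (expC (Fintype.piFinset X) fun x => expC (Fintype.piFinset Y) fun y =>
          f (x u₀ + y v₀) * ∏ j ∈ s, h j (x j.1 + y j.2))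
        = expC (Fintype.piFinset Y) fun y => expC (Fintype.piFinset X) fun x =>
            f (x u₀ + y v₀) * ∏ j ∈ s, h j (x j.1 + y j.2) := expC_comm _ _ _
      _ = expC (Y v₀) fun r => expC (Fintype.piFinset (Function.update Y v₀ {y₀})) fun y' =>
            expC (Fintype.piFinset X) fun x =>
              f (x u₀ + Function.update y' v₀ r v₀) *
                ∏ j ∈ s, h j (x j.1 + Function.update y' v₀ r j.2) :=
          expC_piFinset_split Y v₀ y₀ hy₀ _
      _ = expC (Fintype.piFinset (Function.update Y v₀ {y₀})) fun y' => expC (Y v₀) fun r =>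
            expC (Fintype.piFinset X) fun x =>
              f (x u₀ + Function.update y' v₀ r v₀) *
                ∏ j ∈ s, h j (x j.1 + Function.update y' v₀ r j.2) := expC_comm _ _ _
      _ = expC (Fintype.piFinset (Function.update Y v₀ {y₀})) fun y' =>
            expC (Fintype.piFinset X) fun x => expC (Y v₀) fun r =>
              f (x u₀ + Function.update y' v₀ r v₀) *
                ∏ j ∈ s, h j (x j.1 + Function.update y' v₀ r j.2) :=
          expC_congr fun y' _ => expC_comm _ _ _
      _ = expC (Fintype.piFinset (Function.update Y v₀ {y₀})) fun y' =>
            expC (X u₀) fun t => expC (Fintype.piFinset (Function.update X u₀ {x₀})) fun x' =>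
              expC (Y v₀) fun r =>
                f (Function.update x' u₀ t u₀ + Function.update y' v₀ r v₀) *
                  ∏ j ∈ s, h j (Function.update x' u₀ t j.1 + Function.update y' v₀ r j.2) :=
          expC_congr fun y' _ => expC_piFinset_split X u₀ x₀ hx₀ _
      _ = _ := expC_congr fun y' _ => expC_comm _ _ _
  rw [key]
  refine norm_expC_le (localU2Norm_nonneg L (du u₀) (dv v₀) f) fun y' _ => ?_
  refine norm_expC_le (localU2Norm_nonneg L (du u₀) (dv v₀) f) fun x' _ => ?_
  have hrw : (expC (X u₀) fun t => expC (Y v₀) fun r =>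
        f (Function.update x' u₀ t u₀ + Function.update y' v₀ r v₀) *
          ∏ j ∈ s, h j (Function.update x' u₀ t j.1 + Function.update y' v₀ r j.2))
      = expC (X u₀) fun t => expC (Y v₀) fun r =>
          f (t + r) * ((∏ j ∈ s.filter (fun j => j.1 = u₀), h j (t + y' j.2)) *
            (∏ j ∈ s.filter (fun j => ¬ j.1 = u₀),
              h j (x' j.1 + Function.update y' v₀ r j.2))) := by
    refine expC_congr fun t _ => expC_congr fun r _ => ?_
    rw [Function.update_self, Function.update_self]
    congr 1
    rw [← Finset.prod_filter_mul_prod_filter_not s (fun j => j.1 = u₀)]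
    congr 1
    · refine Finset.prod_congr rfl fun j hj => ?_
      rw [Finset.mem_filter] at hj
      have hj2 : j.2 ≠ v₀ := by
        intro hc
        have hj0 : j = (u₀, v₀) := Prod.ext hj.2 hc
        exact hs (hj0 ▸ hj.1)
      rw [show Function.update x' u₀ t j.1 = t by rw [hj.2]; exact Function.update_self _ _ _,
        Function.update_of_ne hj2]
    · refine Finset.prod_congr rfl fun j hj => ?_
      rw [Finset.mem_filter] at hj
      rw [Function.update_of_ne hj.2]
  rw [hrw]
  refine vn L (du u₀) (dv v₀) f _ _ (fun t => ?_) (fun r => ?_)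
  · rw [norm_prod]
    exact Finset.prod_le_one (fun j _ => norm_nonneg _) (fun j _ => hh j _)
  · rw [norm_prod]
    exact Finset.prod_le_one (fun j _ => norm_nonneg _) (fun j _ => hh j _)

/-- Counting lemma for induced binary sums across linear atoms. -/
theorem statement18 (p : ℕ) [NeZero p] (hp : p.Prime) (ε : ℝ) (hε : 0 < ε)
    {U V : Type*} [Fintype U] [Fintype V] [DecidableEq U] [DecidableEq V]
    (E : Finset (U × V)) (n ℓ : ℕ) (A : Finset (Fin n → ZMod p))
    (L : Fin ℓ → (Fin n → ZMod p)) (hL : LinearIndependent (ZMod p) L)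
    (du : U → (Fin ℓ → ZMod p)) (dv : V → (Fin ℓ → ZMod p))
    (hunif : ∀ (u : U) (v : V),
      localU2Norm L (du u) (dv v)
          (fun x => indC A x - (density A (linAtom L (du u + dv v)) : ℂ)) ≤ ε) :
    |(((((Fintype.piFinset fun u : U => linAtom L (du u)) ×ˢ
          (Fintype.piFinset fun v : V => linAtom L (dv v))).filter
            fun xy => ∀ (u : U) (v : V), (xy.1 u + xy.2 v ∈ A ↔ (u, v) ∈ E)).card : ℝ)) -
        (∏ u : U, ∏ v : V,
            (if (u, v) ∈ E then density A (linAtom L (du u + dv v))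
              else 1 - density A (linAtom L (du u + dv v)))) *
          ((∏ u : U, ((linAtom L (du u)).card : ℝ)) * ∏ v : V, ((linAtom L (dv v)).card : ℝ))|
      ≤ ε * (Fintype.card U : ℝ) * (Fintype.card V : ℝ) *
          ((∏ u : U, ((linAtom L (du u)).card : ℝ)) * ∏ v : V, ((linAtom L (dv v)).card : ℝ)) := by
  classical
  have hne : ∀ a : Fin ℓ → ZMod p, (linAtom L a).Nonempty := fun a => linAtom_nonempty hp hL a
  set g : U × V → (Fin n → ZMod p) → ℂ :=
    fun j t => if j ∈ E then indC A t else 1 - indC A t with hgdef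
  set αc : U × V → ℂ := fun j =>
    if j ∈ E then ((density A (linAtom L (du j.1 + dv j.2)) : ℝ) : ℂ)
    else 1 - ((density A (linAtom L (du j.1 + dv j.2)) : ℝ) : ℂ) with hαcdef
  have hdens : ∀ j : U × V, 0 ≤ density A (linAtom L (du j.1 + dv j.2)) ∧
      density A (linAtom L (du j.1 + dv j.2)) ≤ 1 := by
    intro j
    have hb := hne (du j.1 + dv j.2)
    have hpos : (0:ℝ) < ((linAtom L (du j.1 + dv j.2)).card : ℝ) := by
      exact_mod_cast hb.card_pos
    constructor
    · exact div_nonneg (by positivity) hpos.le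
    · rw [density, div_le_one hpos]
      exact_mod_cast Finset.card_le_card Finset.inter_subset_right
  have hαc_norm : ∀ j, ‖αc j‖ ≤ 1 := by
    intro j
    obtain ⟨h0, h1⟩ := hdens j
    by_cases hj : j ∈ E
    · rw [hαcdef]
      simp only [if_pos hj]
      rw [Complex.norm_real, Real.norm_eq_abs, abs_le]
      constructor <;> linarith
    · rw [hαcdef]
      simp only [if_neg hj]
      rw [show (1 : ℂ) - ((density A (linAtom L (du j.1 + dv j.2)) : ℝ) : ℂ)
          = (((1 - density A (linAtom L (du j.1 + dv j.2)) : ℝ)) : ℂ) by push_cast; ring]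
      rw [Complex.norm_real, Real.norm_eq_abs, abs_le]
      constructor <;> linarith
  have hg_norm : ∀ (j : U × V) (t : Fin n → ZMod p), ‖g j t‖ ≤ 1 := by
    intro j t
    by_cases hj : j ∈ E
    · rw [hgdef]; simp only [if_pos hj, indC]
      by_cases ht : t ∈ A <;> simp [ht]
    · rw [hgdef]; simp only [if_neg hj, indC]
      by_cases ht : t ∈ A <;> simp [ht]
  have hfnorm : ∀ j : U × V, localU2Norm L (du j.1) (dv j.2) (fun t => g j t - αc j) ≤ ε := by
    intro j
    by_cases hj : j ∈ E
    · have hfun : (fun t => g j t - αc j)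
          = fun x => indC A x - ((density A (linAtom L (du j.1 + dv j.2)) : ℝ) : ℂ) := by
        funext t; rw [hgdef, hαcdef]; simp only [if_pos hj]
      rw [hfun]
      exact hunif j.1 j.2
    · have hfun : (fun t => g j t - αc j)
          = fun x => -((fun x => indC A x -
              ((density A (linAtom L (du j.1 + dv j.2)) : ℝ) : ℂ)) x) := by
        funext t; rw [hgdef, hαcdef]; simp only [if_neg hj]; ring
      rw [hfun, localU2Norm_neg]
      exact hunif j.1 j.2
  have hXpane : (Fintype.piFinset fun u : U => linAtom L (du u)).Nonempty :=
    Fintype.piFinset_nonempty.mpr fun u => hne (du u)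
  have hYpane : (Fintype.piFinset fun v : V => linAtom L (dv v)).Nonempty :=
    Fintype.piFinset_nonempty.mpr fun v => hne (dv v)
  set Φ : Finset (U × V) → ℂ := fun s => (∏ j ∈ sᶜ, αc j) *
      expC (Fintype.piFinset fun u : U => linAtom L (du u)) (fun x =>
        expC (Fintype.piFinset fun v : V => linAtom L (dv v)) fun y =>
          ∏ j ∈ s, g j (x j.1 + y j.2)) with hΦdef
  have hstep : ∀ (s : Finset (U × V)) (j₀ : U × V), j₀ ∉ s → ‖Φ (insert j₀ s) - Φ s‖ ≤ ε := by
    intro s j₀ hj₀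
    have hprod : (∏ j ∈ sᶜ, αc j) = αc j₀ * ∏ j ∈ (insert j₀ s)ᶜ, αc j := by
      rw [Finset.compl_insert]
      exact (Finset.mul_prod_erase sᶜ αc (Finset.mem_compl.mpr hj₀)).symm
    have h2 : (expC (Fintype.piFinset fun u : U => linAtom L (du u)) fun x =>
          expC (Fintype.piFinset fun v : V => linAtom L (dv v)) fun y =>
            αc j₀ * ∏ j ∈ s, g j (x j.1 + y j.2))
        = αc j₀ * expC (Fintype.piFinset fun u : U => linAtom L (du u)) fun x =>
            expC (Fintype.piFinset fun v : V => linAtom L (dv v)) fun y =>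
              ∏ j ∈ s, g j (x j.1 + y j.2) := by
      rw [← expC_mul_left]
      exact expC_congr fun x _ => expC_mul_left _ _ _
    have hE : (expC (Fintype.piFinset fun u : U => linAtom L (du u)) fun x =>
          expC (Fintype.piFinset fun v : V => linAtom L (dv v)) fun y =>
            (g j₀ (x j₀.1 + y j₀.2) - αc j₀) * ∏ j ∈ s, g j (x j.1 + y j.2))
        = (expC (Fintype.piFinset fun u : U => linAtom L (du u)) fun x =>
            expC (Fintype.piFinset fun v : V => linAtom L (dv v)) fun y =>
              ∏ j ∈ insert j₀ s, g j (x j.1 + y j.2))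
          - αc j₀ * (expC (Fintype.piFinset fun u : U => linAtom L (du u)) fun x =>
              expC (Fintype.piFinset fun v : V => linAtom L (dv v)) fun y =>
                ∏ j ∈ s, g j (x j.1 + y j.2)) := by
      rw [← h2, ← expC_sub]
      refine expC_congr fun x _ => ?_
      rw [← expC_sub]
      refine expC_congr fun y _ => ?_
      rw [Finset.prod_insert hj₀]
      ring
    have hsplit : Φ (insert j₀ s) - Φ s
        = (∏ j ∈ (insert j₀ s)ᶜ, αc j) *
            (expC (Fintype.piFinset fun u : U => linAtom L (du u)) fun x =>
              expC (Fintype.piFinset fun v : V => linAtom L (dv v)) fun y =>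
                (g j₀ (x j₀.1 + y j₀.2) - αc j₀) * ∏ j ∈ s, g j (x j.1 + y j.2)) := by
      rw [hΦdef]
      simp only
      rw [hE, hprod]
      ring
    rw [hsplit, norm_mul]
    have hC : ‖∏ j ∈ (insert j₀ s)ᶜ, αc j‖ ≤ 1 := by
      rw [norm_prod]
      exact Finset.prod_le_one (fun _ _ => norm_nonneg _) (fun j _ => hαc_norm j)
    have hcore : ‖expC (Fintype.piFinset fun u : U => linAtom L (du u)) fun x =>
          expC (Fintype.piFinset fun v : V => linAtom L (dv v)) fun y =>
            (g j₀ (x j₀.1 + y j₀.2) - αc j₀) * ∏ j ∈ s, g j (x j.1 + y j.2)‖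
        ≤ localU2Norm L (du j₀.1) (dv j₀.2) (fun t => g j₀ t - αc j₀) :=
      core L hne du dv s j₀.1 j₀.2 (by simpa using hj₀) (fun t => g j₀ t - αc j₀) g hg_norm
    have hfin := mul_le_mul hC (hcore.trans (hfnorm j₀)) (norm_nonneg _) zero_le_one
    rw [one_mul] at hfin
    exact hfin
  have htele : ∀ s : Finset (U × V), ‖Φ s - Φ ∅‖ ≤ ε * s.card := by
    intro s
    induction s using Finset.induction_on with
    | empty => simp
    | @insert j₀ s hj₀ ih =>
      calc ‖Φ (insert j₀ s) - Φ ∅‖ ≤ ‖Φ (insert j₀ s) - Φ s‖ + ‖Φ s - Φ ∅‖ := by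
            rw [show Φ (insert j₀ s) - Φ ∅ = (Φ (insert j₀ s) - Φ s) + (Φ s - Φ ∅) by ring]
            exact norm_add_le _ _
        _ ≤ ε + ε * s.card := add_le_add (hstep s j₀ hj₀) ih
        _ ≤ ε * (insert j₀ s).card := by
            rw [Finset.card_insert_of_notMem hj₀]
            push_cast
            nlinarith [hε.le]
  -- final assembly
  set cnt : ℕ := (((Fintype.piFinset fun u : U => linAtom L (du u)) ×ˢ
      (Fintype.piFinset fun v : V => linAtom L (dv v))).filter
        fun xy => ∀ (u : U) (v : V), (xy.1 u + xy.2 v ∈ A ↔ (u, v) ∈ E)).card with hcntdef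
  set P : ℝ := ∏ u : U, ∏ v : V,
      (if (u, v) ∈ E then density A (linAtom L (du u + dv v))
        else 1 - density A (linAtom L (du u + dv v))) with hPdef
  set cardsR : ℝ := (∏ u : U, ((linAtom L (du u)).card : ℝ)) *
      ∏ v : V, ((linAtom L (dv v)).card : ℝ) with hcardsRdef
  set NC : ℂ := ((Fintype.piFinset fun u : U => linAtom L (du u)).card : ℂ)
      * ((Fintype.piFinset fun v : V => linAtom L (dv v)).card : ℂ) with hNCdef
  have hNC0x : ((Fintype.piFinset fun u : U => linAtom L (du u)).card : ℂ) ≠ 0 :=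
    Nat.cast_ne_zero.mpr hXpane.card_pos.ne'
  have hNC0y : ((Fintype.piFinset fun v : V => linAtom L (dv v)).card : ℂ) ≠ 0 :=
    Nat.cast_ne_zero.mpr hYpane.card_pos.ne'
  have hpoint : ∀ (x : U → Fin n → ZMod p) (y : V → Fin n → ZMod p),
      (if (∀ (u : U) (v : V), (x u + y v ∈ A ↔ (u, v) ∈ E)) then (1:ℂ) else 0)
        = ∏ j : U × V, g j (x j.1 + y j.2) := by
    intro x y
    have hgj : ∀ j : U × V, g j (x j.1 + y j.2)
        = if (x j.1 + y j.2 ∈ A ↔ j ∈ E) then (1:ℂ) else 0 := by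
      intro j
      by_cases hj : j ∈ E <;> by_cases ht : x j.1 + y j.2 ∈ A <;>
        simp [hgdef, indC, hj, ht]
    simp only [hgj]
    rw [Fintype.prod_boole]
    by_cases hcond : ∀ (u : U) (v : V), (x u + y v ∈ A ↔ (u, v) ∈ E)
    · have hall : ∀ i : U × V, (x i.1 + y i.2 ∈ A ↔ i ∈ E) := fun j => by
        have := hcond j.1 j.2
        simpa using this
      rw [if_pos hcond, if_pos hall]
    · have hnall : ¬ ∀ i : U × V, (x i.1 + y i.2 ∈ A ↔ i ∈ E) := fun hc =>
        hcond fun u v => hc (u, v)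
      rw [if_neg hcond, if_neg hnall]
  have hiden : ∀ S : ℂ,
      ((Fintype.piFinset fun u : U => linAtom L (du u)).card : ℂ)
        * ((Fintype.piFinset fun v : V => linAtom L (dv v)).card : ℂ)
        * (((Fintype.piFinset fun u : U => linAtom L (du u)).card : ℂ)⁻¹
          * (((Fintype.piFinset fun v : V => linAtom L (dv v)).card : ℂ)⁻¹ * S)) = S := by
    intro S
    calc ((Fintype.piFinset fun u : U => linAtom L (du u)).card : ℂ)
        * ((Fintype.piFinset fun v : V => linAtom L (dv v)).card : ℂ)
        * (((Fintype.piFinset fun u : U => linAtom L (du u)).card : ℂ)⁻¹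
          * (((Fintype.piFinset fun v : V => linAtom L (dv v)).card : ℂ)⁻¹ * S))
        = (((Fintype.piFinset fun u : U => linAtom L (du u)).card : ℂ)
            * ((Fintype.piFinset fun u : U => linAtom L (du u)).card : ℂ)⁻¹)
          * ((((Fintype.piFinset fun v : V => linAtom L (dv v)).card : ℂ))
            * ((Fintype.piFinset fun v : V => linAtom L (dv v)).card : ℂ)⁻¹) * S := by ring
      _ = S := by rw [mul_inv_cancel₀ hNC0x, mul_inv_cancel₀ hNC0y, one_mul, one_mul]
  have hcnt : ((cnt : ℕ) : ℂ) = NC * Φ Finset.univ := by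
    rw [hcntdef, Finset.card_filter]
    push_cast
    rw [Finset.sum_product]
    rw [show (∑ x ∈ (Fintype.piFinset fun u : U => linAtom L (du u)),
          ∑ y ∈ (Fintype.piFinset fun v : V => linAtom L (dv v)),
            if (∀ (u : U) (v : V), (x u + y v ∈ A ↔ (u, v) ∈ E)) then (1:ℂ) else 0)
        = ∑ x ∈ (Fintype.piFinset fun u : U => linAtom L (du u)),
            ∑ y ∈ (Fintype.piFinset fun v : V => linAtom L (dv v)),
              ∏ j : U × V, g j (x j.1 + y j.2) from
      Finset.sum_congr rfl fun x _ => Finset.sum_congr rfl fun y _ => hpoint x y]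
    rw [hΦdef]
    simp only [Finset.compl_univ, Finset.prod_empty, one_mul]
    unfold expC
    simp only [← Finset.mul_sum]
    rw [hNCdef, hiden]
  have hΦempty : Φ ∅ = ∏ j : U × V, αc j := by
    rw [hΦdef]
    simp only [Finset.compl_empty]
    have h2 : (fun x : U → Fin n → ZMod p =>
          expC (Fintype.piFinset fun v : V => linAtom L (dv v)) fun y =>
            ∏ j ∈ (∅ : Finset (U × V)), g j (x j.1 + y j.2)) = fun _ => (1:ℂ) := by
      funext x
      rw [show (fun y : V → Fin n → ZMod p =>
          ∏ j ∈ (∅ : Finset (U × V)), g j (x j.1 + y j.2)) = fun _ => (1:ℂ) from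
        funext fun y => Finset.prod_empty]
      exact expC_const _ hYpane 1
    rw [h2, expC_const _ hXpane 1, mul_one]
  have hNCr : NC = ((cardsR : ℝ) : ℂ) := by
    rw [hNCdef, hcardsRdef, Fintype.card_piFinset, Fintype.card_piFinset]
    push_cast
    ring
  have hPC : ((P : ℝ) : ℂ) = ∏ j : U × V, αc j := by
    rw [hPdef, Fintype.prod_prod_type]
    push_cast
    refine Finset.prod_congr rfl fun u _ => Finset.prod_congr rfl fun v _ => ?_
    rw [hαcdef]
    simp only
    rw [apply_ite ((↑) : ℝ → ℂ)]
    push_cast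
    rfl
  have hcardsR_nonneg : (0:ℝ) ≤ cardsR := by
    rw [hcardsRdef]
    have h1 : (0:ℝ) ≤ ∏ u : U, ((linAtom L (du u)).card : ℝ) :=
      Finset.prod_nonneg fun u _ => Nat.cast_nonneg _
    have h2 : (0:ℝ) ≤ ∏ v : V, ((linAtom L (dv v)).card : ℝ) :=
      Finset.prod_nonneg fun v _ => Nat.cast_nonneg _
    exact mul_nonneg h1 h2
  have e2 : ((P * cardsR : ℝ) : ℂ) = NC * Φ ∅ := by
    rw [Complex.ofReal_mul, hPC, ← hNCr, hΦempty]
    ring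
  have hid : (((cnt : ℝ) - P * cardsR : ℝ) : ℂ) = NC * (Φ Finset.univ - Φ ∅) := by
    rw [Complex.ofReal_sub, e2]
    rw [show ((((cnt:ℕ):ℝ)):ℂ) = ((cnt:ℕ):ℂ) by push_cast; rfl]
    rw [hcnt]
    ring
  calc |((cnt : ℕ) : ℝ) - P * cardsR|
      = ‖((((cnt : ℕ) : ℝ) - P * cardsR : ℝ) : ℂ)‖ := by
        rw [Complex.norm_real, Real.norm_eq_abs]
    _ = ‖NC * (Φ Finset.univ - Φ ∅)‖ := by rw [hid]
    _ = cardsR * ‖Φ Finset.univ - Φ ∅‖ := by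
        rw [norm_mul, hNCr, Complex.norm_real, Real.norm_eq_abs,
          abs_of_nonneg hcardsR_nonneg]
    _ ≤ cardsR * (ε * ((Finset.univ : Finset (U × V)).card : ℝ)) :=
        mul_le_mul_of_nonneg_left (htele Finset.univ) hcardsR_nonneg
    _ = ε * (Fintype.card U : ℝ) * (Fintype.card V : ℝ) * cardsR := by
        rw [Finset.card_univ, Fintype.card_prod]
        push_cast
        ring

end TW
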